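/- Let L = {R, G, X, Y} and S_26 = {RRX, RXX, RYY, GYX, GXX, YYX, XXX}. If L' ⊊ L is such that Forb_c(S_26) is a semi-free amalgamation class with set of solutions L', then L' = {R, G, Y}. -/

import Mathlib

namespace Paper

variable {L M : Type}

/-- The structure with colouring `r` embeds no triangle from `S`
(triangles identified with the multiset of their three edge colours). -/
def Avoids (r : M → M → L) (S : Set (Multiset L)) : Prop :=
  ∀ a b c : M, a ≠ b → a ≠ c → b ≠ c → ({r a b, r a c, r b c} : Multiset L) ∉ S

/-- The substructure on `T` embeds no triangle from `S`. -/
def AvoidsOn (r : M → M → L) (T : Set M) (S : Set (Multiset L)) : Prop :=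
  ∀ a ∈ T, ∀ b ∈ T, ∀ c ∈ T, a ≠ b → a ≠ c → b ≠ c →
    ({r a b, r a c, r b c} : Multiset L) ∉ S

/-- Colouring the pair `(a,c)` by `R` creates no forbidden triangle over a point of `B`. -/
def Compatible (r : M → M → L) (S : Set (Multiset L)) (B : Set M) (a c : M) (R : L) : Prop :=
  ∀ b ∈ B, ({r a b, r b c, R} : Multiset L) ∉ S

/-- `R` is the greatest relation of `L'` (in the priority order `le`) whose use on the
pair `(a,c)` creates no forbidden triangle over `B`. -/
def PriorityColour (le : L → L → Prop) (r : M → M → L) (S : Set (Multiset L)) (L' : Set L)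
    (B : Set M) (a c : M) (R : L) : Prop :=
  (R ∈ L' ∧ Compatible r S B a c R) ∧
    ∀ R' : L, R' ∈ L' → Compatible r S B a c R' → le R' R

/-- `A ⫫_B C`: the substructure on `A ∪ B ∪ C` is the prioritised semi-free amalgam
`(A ∪ B) ⊗_B (B ∪ C)`. -/
def Indep (le : L → L → Prop) (r : M → M → L) (S : Set (Multiset L)) (L' : Set L)
    (A B C : Set M) : Prop :=
  A ∩ C ⊆ B ∧ ∀ a ∈ A, a ∉ B → ∀ c ∈ C, c ∉ B → PriorityColour le r S L' B a c (r a c)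

/-- Whenever the prioritised semi-free amalgam `A ⊗_B C` of members of `Forb_c(S)` is
defined, it lies in `Forb_c(S)`.  (The amalgam is represented by a finite vertex type
`V = A ∪ C` with `B = A ∩ C`, whose cross edges are coloured by the priority rule.) -/
def AmalgamAvoids (le : L → L → Prop) (S : Set (Multiset L)) (L' : Set L) : Prop :=
  ∀ (V : Type) [Fintype V] (rr : V → V → L) (A C : Set V),
    (∀ a b, rr a b = rr b a) → A ∪ C = Set.univ →
    AvoidsOn rr A S → AvoidsOn rr C S →
    (∀ a ∈ A \ C, ∀ c ∈ C \ A, PriorityColour le rr S L' (A ∩ C) a c (rr a c)) →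
    Avoids rr S

/-- The prioritised semi-free amalgam of members of `Forb_c(S)` is always defined. -/
def AmalgamDefined (le : L → L → Prop) (S : Set (Multiset L)) (L' : Set L) : Prop :=
  ∀ (V : Type) [Fintype V] (rr : V → V → L) (A C : Set V),
    (∀ a b, rr a b = rr b a) → A ∪ C = Set.univ →
    AvoidsOn rr A S → AvoidsOn rr C S →
    ∀ a ∈ A \ C, ∀ c ∈ C \ A, ∃ R : L, PriorityColour le rr S L' (A ∩ C) a c R

/-- `Forb_c(S)` is a prioritised semi-free amalgamation class w.r.t. the order `le` on `L'`. -/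
def IsPrioritisedSemiFree (le : L → L → Prop) (S : Set (Multiset L)) (L' : Set L) : Prop :=
  AmalgamDefined le S L' ∧ AmalgamAvoids le S L'

/-- `Forb_c(S)` is a semi-free amalgamation class with set of solutions `L'`. -/
def IsSemiFree (S : Set (Multiset L)) (L' : Set L) : Prop :=
  ∀ (V : Type) [Fintype V] (rr : V → V → L) (A C : Set V),
    (∀ a b, rr a b = rr b a) → A ∪ C = Set.univ →
    AvoidsOn rr A S → AvoidsOn rr C S →
    ∃ rr' : V → V → L, (∀ a b, rr' a b = rr' b a) ∧ Avoids rr' S ∧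
      (∀ a ∈ A, ∀ b ∈ A, rr' a b = rr a b) ∧
      (∀ a ∈ C, ∀ b ∈ C, rr' a b = rr a b) ∧
      (∀ a ∈ A \ C, ∀ c ∈ C \ A, rr' a c ∈ L')

/-- `Forb_c(S)` has the amalgamation property (with joint embedding as the case
of empty intersection); it is then an amalgamation class. -/
def HasAmalgamation (S : Set (Multiset L)) : Prop :=
  ∀ (V : Type) [Fintype V] (rr : V → V → L) (A C : Set V),
    (∀ a b, rr a b = rr b a) → A ∪ C = Set.univ →
    AvoidsOn rr A S → AvoidsOn rr C S →
    ∃ rr' : V → V → L, (∀ a b, rr' a b = rr' b a) ∧ Avoids rr' S ∧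
      (∀ a ∈ A, ∀ b ∈ A, rr' a b = rr a b) ∧
      (∀ a ∈ C, ∀ b ∈ C, rr' a b = rr a b)

/-- `(M, r)` is the Fraïssé limit of `Forb_c(S)`: a countable structure whose complete
edge-colouring avoids `S`, which is homogeneous, and which satisfies the extension
property with respect to members of `Forb_c(S)`. -/
structure IsLimit (S : Set (Multiset L)) (r : M → M → L) : Prop where
  countable : Countable M
  symm : ∀ a b : M, r a b = r b a
  avoids : Avoids r S
  extension : ∀ (n : ℕ) (c : Fin n → Fin n → L), (∀ i j, c i j = c j i) →
    Avoids c S → ∀ (A : Finset (Fin n)) (f : Fin n → M), Set.InjOn f ↑A →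
    (∀ i ∈ A, ∀ j ∈ A, i ≠ j → r (f i) (f j) = c i j) →
    ∃ g : Fin n ↪ M, (∀ i ∈ A, g i = f i) ∧ ∀ i j : Fin n, i ≠ j → r (g i) (g j) = c i j
  homogeneous : ∀ (A : Finset M) (f : M → M), Set.InjOn f ↑A →
    (∀ a ∈ A, ∀ b ∈ A, r (f a) (f b) = r a b) →
    ∃ g : Equiv.Perm M, (∀ x y, r (g x) (g y) = r x y) ∧ ∀ a ∈ A, g a = f a

/-- The automorphism group of the coloured structure `(M, r)`, as a subgroup of `Perm M`. -/
def aut (r : M → M → L) : Subgroup (Equiv.Perm M) where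
  carrier := {g : Equiv.Perm M | ∀ a b, r (g a) (g b) = r a b}
  one_mem' := fun _ _ => rfl
  mul_mem' := by
    intro g h hg hh a b
    have : r (g (h a)) (g (h b)) = r a b := (hg (h a) (h b)).trans (hh a b)
    simpa [Equiv.Perm.mul_apply] using this
  inv_mem' := by
    intro g hg a b
    have := hg (g⁻¹ a) (g⁻¹ b)
    simpa using this.symm

/-- The pointwise stabiliser `G_(X)` of `X` inside `Aut(M, r)`. -/
def pstab (r : M → M → L) (X : Set M) : Subgroup (aut r) where
  carrier := {g | ∀ x ∈ X, (g : Equiv.Perm M) x = x}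
  one_mem' := fun _ _ => rfl
  mul_mem' := by
    intro g h hg hh x hx
    have : (g : Equiv.Perm M) ((h : Equiv.Perm M) x) = x := by rw [hh x hx, hg x hx]
    simpa [Equiv.Perm.mul_apply] using this
  inv_mem' := by
    intro g hg x hx
    have := hg x hx
    simp only [Subgroup.coe_inv]
    conv_lhs => rw [← this]
    simp

/-- The 1-type of `a` over `X`: its orbit under the pointwise stabiliser of `X`. -/
def typeOf (r : M → M → L) (X : Set M) (a : M) : Set M :=
  {b | ∃ g : Equiv.Perm M, g ∈ aut r ∧ (∀ x ∈ X, g x = x) ∧ g a = b}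

/-- Two `n`-tuples have the same type over `X`: they lie in the same orbit under the
pointwise stabiliser of `X`. -/
def SameTypeFn (r : M → M → L) (X : Set M) {n : ℕ} (a b : Fin n → M) : Prop :=
  ∃ g : Equiv.Perm M, g ∈ aut r ∧ (∀ x ∈ X, g x = x) ∧ ∀ i, g (a i) = b i

/-- `f` moves almost maximally: every 1-type over every finite set `X` has a
realisation `b` with `b ⫫_X f(b)`. -/
def MovesAlmostMaximally (le : L → L → Prop) (r : M → M → L) (S : Set (Multiset L))
    (L' : Set L) (f : Equiv.Perm M) : Prop :=
  ∀ (X : Finset M) (a : M), ∃ b ∈ typeOf r ↑X a, Indep le r S L' {b} ↑X {f b}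

/-- The commutator `[x, y] = x⁻¹y⁻¹xy`. -/
def Comm {G : Type*} [Group G] (x y : G) : G := x⁻¹ * y⁻¹ * x * y

/-- `le` is a linear order on the subset `L'`. -/
def IsLinearOn (le : L → L → Prop) (L' : Set L) : Prop :=
  (∀ a ∈ L', le a a) ∧
  (∀ a ∈ L', ∀ b ∈ L', ∀ c ∈ L', le a b → le b c → le a c) ∧
  (∀ a ∈ L', ∀ b ∈ L', le a b → le b a → a = b) ∧
  (∀ a ∈ L', ∀ b ∈ L', le a b ∨ le b a)

/-- `R1 > R2` are the two greatest relations of `L'` in the order `le`. -/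
def TwoGreatest (le : L → L → Prop) (L' : Set L) (R1 R2 : L) : Prop :=
  R1 ∈ L' ∧ R2 ∈ L' ∧ R2 ≠ R1 ∧ le R2 R1 ∧
    (∀ R ∈ L', le R R1) ∧ ∀ R ∈ L', R ≠ R1 → le R R2

/-- Condition A (i): no triangle of `S` contains two occurrences of `R1`,
or an `R1` together with an `R2`. -/
def CondA1 (S : Set (Multiset L)) (R1 R2 : L) : Prop :=
  ∀ t ∈ S, ¬ (({R1, R1} : Multiset L) ≤ t) ∧ ¬ (({R1, R2} : Multiset L) ≤ t)

/-- Condition A (ii): if `a ⫫_{{b} ∪ B} c` and `r(a,b) ∈ L'` then `a ⫫_B c`. -/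
def CondA2 (le : L → L → Prop) (r : M → M → L) (S : Set (Multiset L)) (L' : Set L) : Prop :=
  ∀ (a b c : M) (B : Finset M), r a b ∈ L' →
    Indep le r S L' {a} (insert b ↑B) {c} → Indep le r S L' {a} ↑B {c}

/-- Condition 1: `S` contains no triangle having two of its three edges in `L'`. -/
def Cond1 (S : Set (Multiset L)) (L' : Set L) : Prop :=
  ∀ t ∈ S, ∀ x ∈ L', ∀ y ∈ L', ¬ (({x, y} : Multiset L) ≤ t)

/-- Condition 2 with respect to `L' = {R1, R2}` (ordered `R1 > R2`) and the subsets
`Lst = L*` and `Lhat = L̂`. -/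
def Cond2 (S : Set (Multiset L)) (R1 R2 : L) (Lst Lhat : Set L) : Prop :=
  R1 ≠ R2 ∧ R1 ∉ Lst ∧ R2 ∉ Lst ∧ R1 ∉ Lhat ∧ R2 ∉ Lhat ∧ (∀ x ∈ Lst, x ∉ Lhat) ∧
  (∀ R' : L, R' ∉ Lhat → R' ≠ R2 → ∀ Ra ∈ Lst, ∀ Rb ∈ Lst,
    ({R', Ra, Rb} : Multiset L) ∈ S) ∧
  (∀ Ra ∈ Lst, ({R2, R2, Ra} : Multiset L) ∈ S) ∧
  (∀ Rh ∈ Lhat, ∀ Ra ∈ Lst, ({R2, Rh, Ra} : Multiset L) ∈ S) ∧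
  (∀ t ∈ S, R1 ∈ t → ∃ Ra ∈ Lst, ∃ Rb ∈ Lst, t = ({R1, Ra, Rb} : Multiset L)) ∧
  (∀ t ∈ S, ({R2, R2} : Multiset L) ≤ t → ∃ Ra ∈ Lst, t = ({R2, R2, Ra} : Multiset L))


/-- The language `L = {R, G, X, Y}` of four binary, symmetric, irreflexive
relation symbols. -/
inductive C4 : Type
  | R | G | X | Y
deriving DecidableEq

/-- The set of forbidden triangles of case #26:
`S_26 = {RRX, RXX, RYY, GYX, GXX, YYX, XXX}`. -/
def S26 : Set (Multiset C4) :=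
  {({C4.R, C4.R, C4.X} : Multiset C4), ({C4.R, C4.X, C4.X} : Multiset C4),
   ({C4.R, C4.Y, C4.Y} : Multiset C4), ({C4.G, C4.Y, C4.X} : Multiset C4),
   ({C4.G, C4.X, C4.X} : Multiset C4), ({C4.Y, C4.Y, C4.X} : Multiset C4),
   ({C4.X, C4.X, C4.X} : Multiset C4)}

/-- The rank realising the priority order `G > R > Y` (with `X` at the bottom). -/
def rank26 : C4 → ℕ
  | C4.G => 3
  | C4.R => 2
  | C4.Y => 1
  | C4.X => 0

/-- The priority order `G > R > Y` on `L' = {R, G, Y}`. -/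
def le26 (x y : C4) : Prop := rank26 x ≤ rank26 y

/-!
Each of `R`, `G`, `Y` is forced into `L'` by an amalgamation of two triangles over a common
edge `b₁b₂`, chosen so that every other colour on the new edge `ac` completes a forbidden
triangle through `b₁` or `b₂`. As `L' ≠ L`, the remaining relation `X` is not a solution.
-/

instance : Fintype C4 :=
  ⟨{.R, .G, .X, .Y}, fun x => by cases x <;> decide⟩

instance : DecidablePred (· ∈ S26) := fun t =>
  decidable_of_iff
    (t = {C4.R, C4.R, C4.X} ∨ t = {C4.R, C4.X, C4.X} ∨ t = {C4.R, C4.Y, C4.Y} ∨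
     t = {C4.G, C4.Y, C4.X} ∨ t = {C4.G, C4.X, C4.X} ∨ t = {C4.Y, C4.Y, C4.X} ∨
     t = {C4.X, C4.X, C4.X}) (by simp [S26])

theorem avoidsOn_triple {r : M → M → L} {S : Set (Multiset L)} (hr : ∀ a b, r a b = r b a)
    {x y z : M} (h : ({r x y, r x z, r y z} : Multiset L) ∉ S) :
    AvoidsOn r {x, y, z} S := by
  intro a ha b hb c hc hab hac hbc
  simp only [Set.mem_insert_iff, Set.mem_singleton_iff] at ha hb hc
  rcases ha with rfl | rfl | rfl <;> rcases hb with rfl | rfl | rfl <;>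
    rcases hc with rfl | rfl | rfl <;> simp only [ne_eq, not_true_eq_false] at hab hac hbc <;>
    refine fun hmem => h ?_ <;> convert hmem using 1 <;>
    simp only [hr b a, hr c a, hr c b, Multiset.insert_eq_cons, ← Multiset.singleton_add] <;> abel

theorem IsSemiFree.mem_of_forall_not_compatible {S : Set (Multiset L)} {L' : Set L}
    (h : IsSemiFree S L') {V : Type} [Fintype V] {rr : V → V → L} {A C : Set V}
    (hsymm : ∀ a b, rr a b = rr b a) (hAC : A ∪ C = Set.univ)
    (hA : AvoidsOn rr A S) (hC : AvoidsOn rr C S) {a c : V} (ha : a ∈ A \ C) (hc : c ∈ C \ A)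
    {R : L} (hforce : ∀ x, x ≠ R → ¬ Compatible rr S (A ∩ C) a c x) : R ∈ L' := by
  obtain ⟨rr', -, hAvoids, hrrA, hrrC, hcross⟩ := h V rr A C hsymm hAC hA hC
  by_contra hR
  obtain ⟨b, hbA, hbC, hbad⟩ : ∃ b ∈ A, b ∈ C ∧ ({rr a b, rr b c, rr' a c} : Multiset L) ∈ S := by
    simpa [Compatible] using hforce (rr' a c) fun e => hR (e ▸ hcross a ha c hc)
  refine hAvoids a b c (fun e => ha.2 (e ▸ hbC)) (fun e => ha.2 (e ▸ hc.1))
    (fun e => hc.2 (e ▸ hbA)) ?_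
  rw [hrrA a ha.1 b hbA, hrrC b hbC c hc.1, Multiset.insert_eq_cons, Multiset.pair_comm]
  exact hbad

/-- The triangles `a b₁ b₂` and `b₁ b₂ c` glued along `b₁b₂`, on the points `0 = a`, `1 = b₁`,
`2 = b₂`, `3 = c`; the colour of the cross edge `ac` is a placeholder. -/
def gadget (ab₁ ab₂ b₁b₂ b₁c b₂c : L) (i j : Fin 4) : L :=
  match min i j, max i j with
  | 0, 1 => ab₁
  | 0, 2 => ab₂
  | 1, 2 => b₁b₂
  | 1, 3 => b₁c
  | 2, 3 => b₂c
  | _, _ => ab₁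

theorem gadget_symm (ab₁ ab₂ b₁b₂ b₁c b₂c : L) (i j : Fin 4) :
    gadget ab₁ ab₂ b₁b₂ b₁c b₂c i j = gadget ab₁ ab₂ b₁b₂ b₁c b₂c j i := by
  unfold gadget
  rw [min_comm, max_comm]

theorem IsSemiFree.mem_of_gadget {S : Set (Multiset L)} {L' : Set L} (h : IsSemiFree S L')
    {ab₁ ab₂ b₁b₂ b₁c b₂c R : L} (hA : ({ab₁, ab₂, b₁b₂} : Multiset L) ∉ S)
    (hC : ({b₁b₂, b₁c, b₂c} : Multiset L) ∉ S)
    (hforce : ∀ x, x ≠ R → ({ab₁, b₁c, x} : Multiset L) ∈ S ∨ ({ab₂, b₂c, x} : Multiset L) ∈ S) :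
    R ∈ L' := by
  refine h.mem_of_forall_not_compatible (rr := gadget ab₁ ab₂ b₁b₂ b₁c b₂c)
    (A := {0, 1, 2}) (C := {1, 2, 3}) (a := 0) (c := 3) (gadget_symm _ _ _ _ _)
    (by ext i; fin_cases i <;> simp) (avoidsOn_triple (gadget_symm _ _ _ _ _) hA)
    (avoidsOn_triple (gadget_symm _ _ _ _ _) hC) (by simp) (by simp) fun x hx hcomp => ?_
  rcases hforce x hx with h₁ | h₂
  · exact hcomp 1 (by simp) h₁
  · exact hcomp 2 (by simp) h₂

/-- **Lemma.** For case #26, `{R, G, Y}` is the only possible set of solutions: if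
`L' ⊊ L` is such that `Forb_c(S_26)` is a semi-free amalgamation class with set of
solutions `L'`, then `L' = {R, G, Y}`. -/
theorem case26_unique_solution_set (L' : Set C4) (hL' : L' ≠ Set.univ)
    (h : IsSemiFree S26 L') : L' = ({C4.R, C4.G, C4.Y} : Set C4) := by
  have hR : C4.R ∈ L' :=
    h.mem_of_gadget (ab₁ := .R) (ab₂ := .Y) (b₁b₂ := .G) (b₁c := .R) (b₂c := .X)
      (by decide) (by decide) (by decide)
  have hG : C4.G ∈ L' :=
    h.mem_of_gadget (ab₁ := .R) (ab₂ := .R) (b₁b₂ := .R) (b₁c := .X) (b₂c := .Y)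
      (by decide) (by decide) (by decide)
  have hY : C4.Y ∈ L' :=
    h.mem_of_gadget (ab₁ := .X) (ab₂ := .X) (b₁b₂ := .Y) (b₁c := .X) (b₂c := .X)
      (by decide) (by decide) (by decide)
  have hX : C4.X ∉ L' := fun hX => hL' (Set.eq_univ_of_forall fun x => by cases x <;> assumption)
  ext x
  cases x <;> simp [hR, hG, hY, hX]

end Paper
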